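/- On the five-point poset P₁ (diamond with a bottom element w), the monotone generator L₁ with L_{a,w} = L_{b,w} = L_{c,w} = L_{d,b} = L_{d,c} = 1 and all other off-diagonal entries 0 is not completely monotone: L₁ cannot be written as a nonnegative linear combination Σ_{f ∈ M} Λ_f I_f over increasing functions f : P₁ → P₁. -/

import Mathlib

open Finset
open scoped Classical

/-- The vector `W^{Γ,x,y}` from the paper, as a function of coordinates `(v,z)`. -/
noncomputable def Wvec {S : Type*} [PartialOrder S] (Γ : Finset S) (x y v z : S) : ℝ :=
  if (x ≤ y ∧ y ∉ Γ ∧ v = y ∧ z ∈ Γ) ∨ (y ≤ x ∧ y ∈ Γ ∧ v = y ∧ z ∉ Γ) then 1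
  else if (x ≤ y ∧ y ∉ Γ ∧ v = x ∧ z ∈ Γ) ∨ (y ≤ x ∧ y ∈ Γ ∧ v = x ∧ z ∉ Γ) then -1
  else 0

/-- The vector `I_f` from the paper: `(I_f)_{x,y} = 1` iff `f x = y`. -/
noncomputable def Ivec {S : Type*} (f : S → S) (x y : S) : ℝ := if f x = y then 1 else 0

/-- `Γ` is an up-set: upward closed. -/
def IsUpSet {S : Type*} [Preorder S] (Γ : Finset S) : Prop :=
  ∀ a b : S, a ∈ Γ → a ≤ b → b ∈ Γ

/-- Euclidean inner product `⟨L, W^{Γ,x,y}⟩` over the off-diagonal coordinates `S₂`. -/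
noncomputable def dotW {S : Type*} [Fintype S] [PartialOrder S]
    (L : S → S → ℝ) (Γ : Finset S) (x y : S) : ℝ :=
  ∑ p ∈ Finset.univ.filter (fun p : S × S => p.1 ≠ p.2), L p.1 p.2 * Wvec Γ x y p.1 p.2

/-- `L` is (the off-diagonal part of) a monotone generator. -/
def IsMonGen {S : Type*} [Fintype S] [PartialOrder S] (L : S → S → ℝ) : Prop :=
  (∀ x y : S, x ≠ y → 0 ≤ L x y) ∧
    ∀ Γ : Finset S, IsUpSet Γ → ∀ x y : S, 0 ≤ dotW L Γ x y

/-- `L` is a completely monotone generator: a nonnegative combination of the `I_f`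
over increasing maps `f`. -/
def IsCMonGen {S : Type*} [Fintype S] [PartialOrder S] (L : S → S → ℝ) : Prop :=
  ∃ Λ : (S → S) → ℝ, (∀ f, 0 ≤ Λ f) ∧ (∀ f, ¬ Monotone f → Λ f = 0) ∧
    ∀ x y : S, x ≠ y → L x y = ∑ f : S → S, Λ f * Ivec f x y

/-- The five-point poset `P₁`: diamond `a < b,c < d` with bottom element `w < a`. -/
inductive P1 | w | a | b | c | d
  deriving DecidableEq

instance instFintypeP1 : Fintype P1 :=
  ⟨⟨(([P1.w, P1.a, P1.b, P1.c, P1.d] : List P1) : Multiset P1), by decide⟩, fun x => by cases x <;> decide⟩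

/-- Order on `P₁`, generated by the covering relations `w<a, a<b, a<c, b<d, c<d`. -/
def P1.ble : P1 → P1 → Bool
  | .w, _ => true
  | .a, .a | .a, .b | .a, .c | .a, .d => true
  | .b, .b | .b, .d => true
  | .c, .c | .c, .d => true
  | .d, .d => true
  | _, _ => false

instance : LE P1 := ⟨fun x y => P1.ble x y⟩
instance : DecidableRel (α := P1) (· ≤ ·) :=
  fun x y => inferInstanceAs (Decidable (P1.ble x y = true))

instance : PartialOrder P1 where
  le_refl := by decide
  le_trans := by decide
  le_antisymm := by decide

/-- The generator `L₁` on `P₁`: rates `L_{a,w}=L_{b,w}=L_{c,w}=L_{d,b}=L_{d,c}=1`. -/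
noncomputable def L1 : P1 → P1 → ℝ := fun x y =>
  if (x = .a ∧ y = .w) ∨ (x = .b ∧ y = .w) ∨ (x = .c ∧ y = .w) ∨
     (x = .d ∧ y = .b) ∨ (x = .d ∧ y = .c) then 1 else 0

/-!
`L₁` is separated from the cone spanned by the `I_f`, `f` monotone, by the functional
`ψ = e_{a,w} + e_{b,a} + e_{b,c} + e_{c,a} + e_{c,b} - e_{d,b} - e_{d,c}`: `⟨ψ, L₁⟩ = -1`, while
`⟨ψ, I_f⟩ ≥ 0` for monotone `f`. Indeed, if `f d = b` then `f c ≤ b`, so either `f c ∈ {a, b}` or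
`f a = f c = w`, and the row of `c` or of `a` compensates the `-1` in the row of `d`;
symmetrically if `f d = c`.
-/

section Certificate

variable {S : Type*} [Fintype S]

theorem sum_sum_mul_Ivec (ψ : S → S → ℝ) (f : S → S) :
    ∑ x, ∑ y, ψ x y * Ivec f x y = ∑ x, ψ x (f x) := by
  simp [Ivec]

theorem IsCMonGen.sum_sum_mul_nonneg [PartialOrder S] {L : S → S → ℝ} (hL : IsCMonGen L)
    {ψ : S → S → ℝ}
    (hψ_diag : ∀ x, ψ x x = 0) (hψ : ∀ f : S → S, Monotone f → 0 ≤ ∑ x, ψ x (f x)) :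
    0 ≤ ∑ x, ∑ y, ψ x y * L x y := by
  obtain ⟨Λ, hΛ_nonneg, hΛ_mono, hL_eq⟩ := hL
  have hexpand : ∑ x, ∑ y, ψ x y * L x y = ∑ f : S → S, Λ f * ∑ x, ψ x (f x) := by
    calc ∑ x, ∑ y, ψ x y * L x y
        = ∑ x, ∑ y, ψ x y * ∑ f : S → S, Λ f * Ivec f x y := by
          refine sum_congr rfl fun x _ => sum_congr rfl fun y _ => ?_
          obtain rfl | hxy := eq_or_ne x y
          · simp [hψ_diag]
          · rw [hL_eq x y hxy]
      _ = ∑ x, ∑ y, ∑ f : S → S, ψ x y * (Λ f * Ivec f x y) := by simp only [mul_sum]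
      _ = ∑ f : S → S, ∑ x, ∑ y, ψ x y * (Λ f * Ivec f x y) :=
          (sum_congr rfl fun _ _ => sum_comm).trans sum_comm
      _ = ∑ f : S → S, Λ f * ∑ x, ∑ y, ψ x y * Ivec f x y := by
          simp only [mul_sum, mul_left_comm]
      _ = ∑ f : S → S, Λ f * ∑ x, ψ x (f x) := by simp only [sum_sum_mul_Ivec]
  rw [hexpand]
  refine sum_nonneg fun f _ => ?_
  by_cases hf : Monotone f
  · exact mul_nonneg (hΛ_nonneg f) (hψ f hf)
  · simp [hΛ_mono f hf]

end Certificate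

namespace P1

theorem univ_eq : (univ : Finset P1) = {.w, .a, .b, .c, .d} := rfl

def certificate : P1 → P1 → ℝ
  | .a, .w => 1
  | .b, .a => 1
  | .b, .c => 1
  | .c, .a => 1
  | .c, .b => 1
  | .d, .b => -1
  | .d, .c => -1
  | _, _ => 0

theorem certificate_self (x : P1) : certificate x x = 0 := by
  cases x <;> rfl

theorem certificate_sum_sum_mul_L1 : ∑ x, ∑ y, certificate x y * L1 x y = -1 := by
  rw [univ_eq]
  simp [certificate, L1]

theorem certificate_nonneg {x : P1} (hx : x ≠ .d) (y : P1) : 0 ≤ certificate x y := by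
  cases x <;> cases y <;> simp_all [certificate]

theorem certificate_d_eq_zero {y : P1} (hb : y ≠ .b) (hc : y ≠ .c) : certificate .d y = 0 := by
  cases y <;> simp_all [certificate]

theorem one_le_certificate_a_add_c {p q : P1} (hpq : p ≤ q) (hq : q ≤ .b) :
    1 ≤ certificate .a p + certificate .c q := by
  revert hpq hq
  cases p <;> cases q <;> norm_num [certificate] <;> decide

theorem one_le_certificate_a_add_b {p q : P1} (hpq : p ≤ q) (hq : q ≤ .c) :
    1 ≤ certificate .a p + certificate .b q := by
  revert hpq hq
  cases p <;> cases q <;> norm_num [certificate] <;> decide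

theorem sum_certificate_nonneg {f : P1 → P1} (hf : Monotone f) :
    0 ≤ ∑ x, certificate x (f x) := by
  rw [univ_eq]
  simp only [mem_insert, mem_singleton, reduceCtorEq, or_self, not_false_eq_true,
    sum_insert, sum_singleton]
  have hw := certificate_nonneg (x := .w) (by decide) (f .w)
  have ha := certificate_nonneg (x := .a) (by decide) (f .a)
  have hb := certificate_nonneg (x := .b) (by decide) (f .b)
  have hc := certificate_nonneg (x := .c) (by decide) (f .c)
  by_cases hdb : f .d = .b
  · have hac := one_le_certificate_a_add_c (hf (by decide : P1.a ≤ .c))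
      (hdb ▸ hf (by decide : P1.c ≤ .d))
    rw [hdb, show certificate .d .b = -1 from rfl]
    linarith
  by_cases hdc : f .d = .c
  · have hab := one_le_certificate_a_add_b (hf (by decide : P1.a ≤ .b))
      (hdc ▸ hf (by decide : P1.b ≤ .d))
    rw [hdc, show certificate .d .c = -1 from rfl]
    linarith
  rw [certificate_d_eq_zero hdb hdc]
  linarith

end P1

/-- the monotone generator `L₁` on `P₁` is not completely monotone. -/
theorem L1_not_cmon : ¬ IsCMonGen L1 := fun h => by
  have hψ := h.sum_sum_mul_nonneg P1.certificate_self fun _ => P1.sum_certificate_nonneg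
  linarith [P1.certificate_sum_sum_mul_L1]
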